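/- Let u ∈ S_n and let D ∈ PD(u) be any pipe dream for u. Then wt(D) ≤_revdom code(u), i.e., for every 1 ≤ ℓ ≤ n, the sum of the entries of wt(D) in positions ℓ, ℓ+1, …, n is at most the sum c_ℓ(u) + c_{ℓ+1}(u) + ⋯ + c_n(u), where both tuples are padded with zeros to length n. -/

import Mathlib

open scoped Classical

/-- The Lehmer code of a permutation of `ℕ` (0-indexed):
`lehmerCode w i = #{j | j > i ∧ w j < w i}`. -/
noncomputable def lehmerCode (w : Equiv.Perm ℕ) (i : ℕ) : ℕ :=
  Set.ncard {j | i < j ∧ w j < w i}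

/-- The number of inversions of a permutation of `ℕ`. -/
noncomputable def inversions (w : Equiv.Perm ℕ) : ℕ :=
  Set.ncard {p : ℕ × ℕ | p.1 < p.2 ∧ w p.2 < w p.1}

/-- The word of a pipe-dream candidate `D ⊆ Δ_n` (0-indexed positions): read the rows
top to bottom and each row from right to left; a cross at `(i, j)` contributes the
letter `i + j` (this is the letter `i + j - 1` in 1-indexed conventions). -/
def pdWord (n : ℕ) (D : Finset (ℕ × ℕ)) : List ℕ :=
  ((List.range n).map fun i =>
    (((List.range n).reverse.filter fun j => decide ((i, j) ∈ D)).map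
      fun j => i + j)).flatten

/-- The permutation traced out by the pipes of `D`: the product of the simple
transpositions given by the word of `D`. -/
def pdPerm (n : ℕ) (D : Finset (ℕ × ℕ)) : Equiv.Perm ℕ :=
  ((pdWord n D).map fun k => Equiv.swap k (k + 1)).prod

/-- `D` is a (reduced) pipe dream for `u` inside the staircase
`Δ_n = {(i,j) : i + j + 1 ≤ n}` (0-indexed): the pipes trace out the permutation `u`
(the pipe entering the top of column `j` exits the left edge in row `i` with `u i = j`),
and no two pipes cross more than once, i.e. `#D = ℓ(u)`. -/
def IsPipeDream (n : ℕ) (u : Equiv.Perm ℕ) (D : Finset (ℕ × ℕ)) : Prop :=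
  (∀ p ∈ D, p.1 + p.2 + 1 ≤ n) ∧ pdPerm n D = u ∧ D.card = inversions u

/-- The weight of a pipe dream: `wt D i` is the number of crosses in (0-indexed) row `i`. -/
def wt (D : Finset (ℕ × ℕ)) (i : ℕ) : ℕ := (D.filter fun p => p.1 = i).card

/-!
Cutting the word of `D` after row `l - 1` factors `u = w * v`, where `v` is the product of the
letters of the rows `≥ l`. These letters are all `≥ l`, so `v` fixes `[0, l)`, and therefore the
inversions `(i, j)` of `u` with `i < l` inject into the inversions of `w`; there are at most
`Σ_{i<l} wt(D)_i` of them, the length of the word of `w`. Since `D` is reduced, `ℓ(u) = |D|`, so the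
inversions of `u` with `i ≥ l`, counted by `Σ_{i≥l} c_i(u)`, number at least `Σ_{i≥l} wt(D)_i`.
-/

def invSet (σ : Equiv.Perm ℕ) : Set (ℕ × ℕ) := {p | p.1 < p.2 ∧ σ p.2 < σ p.1}

def swapsProd (L : List ℕ) : Equiv.Perm ℕ := (L.map fun k => Equiv.swap k (k + 1)).prod

def rowWord (n : ℕ) (D : Finset (ℕ × ℕ)) (i : ℕ) : List ℕ :=
  ((List.range n).reverse.filter fun j => decide ((i, j) ∈ D)).map fun j => i + j

lemma mem_of_apply_mem_of_forall_fixed {α : Type*} {σ : Equiv.Perm α} {S : Set α}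
    (hS : ∀ x ∈ S, σ x = x) {x : α} (hx : σ x ∈ S) : x ∈ S := by
  rwa [← σ.injective (hS _ hx)]

lemma apply_lt_of_forall_ge_fixed {σ : Equiv.Perm ℕ} {n : ℕ} (hσ : ∀ i, n ≤ i → σ i = i)
    {i : ℕ} (hi : i < n) : σ i < n := by
  by_contra! h
  exact hi.not_ge (mem_of_apply_mem_of_forall_fixed (S := Set.Ici n) hσ h)

lemma le_apply_of_forall_lt_fixed {σ : Equiv.Perm ℕ} {l : ℕ} (hσ : ∀ i < l, σ i = i)
    {i : ℕ} (hi : l ≤ i) : l ≤ σ i := by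
  by_contra! h
  exact hi.not_gt (mem_of_apply_mem_of_forall_fixed (S := Set.Iio l) hσ h)

lemma lt_of_mem_invSet {u : Equiv.Perm ℕ} {n : ℕ} (hu : ∀ i, n ≤ i → u i = i) {p : ℕ × ℕ}
    (hp : p ∈ invSet u) : p.1 < n ∧ p.2 < n := by
  obtain ⟨hlt, hinv⟩ := hp
  suffices p.2 < n from ⟨hlt.trans this, this⟩
  by_contra! h
  rw [hu _ h] at hinv
  rcases lt_or_ge p.1 n with h1 | h1
  · exact (apply_lt_of_forall_ge_fixed hu h1).not_ge (h.trans hinv.le)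
  · rw [hu _ h1] at hinv
    omega

lemma invSet_one : invSet 1 = ∅ := by
  ext p
  simpa [invSet] using le_of_lt

lemma swapsProd_cons (k : ℕ) (L : List ℕ) :
    swapsProd (k :: L) = Equiv.swap k (k + 1) * swapsProd L :=
  List.prod_cons

lemma swapsProd_append (L L' : List ℕ) :
    swapsProd (L ++ L') = swapsProd L * swapsProd L' := by
  rw [swapsProd, List.map_append, List.prod_append]
  rfl

lemma swapsProd_apply_of_lt {L : List ℕ} {l : ℕ} (hL : ∀ k ∈ L, l ≤ k) {i : ℕ} (hi : i < l) :
    swapsProd L i = i := by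
  induction L with
  | nil => rfl
  | cons k L ih =>
    have hk := hL k List.mem_cons_self
    rw [swapsProd_cons, Equiv.Perm.mul_apply, ih fun k' hk' => hL k' (List.mem_cons_of_mem _ hk')]
    exact Equiv.swap_apply_of_ne_of_ne (by omega) (by omega)

lemma invSet_swap_mul_subset (σ : Equiv.Perm ℕ) (k : ℕ) :
    invSet (Equiv.swap k (k + 1) * σ) ⊆ insert (σ⁻¹ k, σ⁻¹ (k + 1)) (invSet σ) := by
  rintro ⟨i, j⟩ ⟨hij, hinv⟩
  by_cases hσ : σ j < σ i
  · exact Set.mem_insert_of_mem _ ⟨hij, hσ⟩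
  -- otherwise the swap reverses the order of `σ i < σ j`, which forces `(σ i, σ j) = (k, k+1)`
  have hσ' : σ i < σ j := lt_of_le_of_ne (not_lt.mp hσ) (σ.injective.ne hij.ne)
  simp only [Equiv.Perm.mul_apply, Equiv.swap_apply_def] at hinv
  have hi : σ i = k := by split_ifs at hinv <;> omega
  have hj : σ j = k + 1 := by split_ifs at hinv <;> omega
  exact Or.inl (Prod.ext (σ.eq_inv_iff_eq.mpr hi) (σ.eq_inv_iff_eq.mpr hj))

lemma finite_invSet_swapsProd (L : List ℕ) : (invSet (swapsProd L)).Finite := by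
  induction L with
  | nil => exact invSet_one ▸ Set.finite_empty
  | cons k L ih =>
    rw [swapsProd_cons]
    exact (ih.insert _).subset (invSet_swap_mul_subset (swapsProd L) k)

lemma inversions_swapsProd_le (L : List ℕ) : inversions (swapsProd L) ≤ L.length := by
  induction L with
  | nil => exact (congrArg Set.ncard invSet_one).trans_le (Set.ncard_empty _).le
  | cons k L ih =>
    calc inversions (swapsProd (k :: L))
        ≤ (insert (_ : ℕ × ℕ) (invSet (swapsProd L))).ncard := by
          rw [swapsProd_cons]
          exact Set.ncard_le_ncard (invSet_swap_mul_subset (swapsProd L) k)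
            ((finite_invSet_swapsProd L).insert _)
      _ ≤ inversions (swapsProd L) + 1 := Set.ncard_insert_le _ _
      _ ≤ (k :: L).length := by simpa using ih

lemma inversions_eq_ncard_add_ncard {u : Equiv.Perm ℕ} (hfin : (invSet u).Finite) (l : ℕ) :
    inversions u = {p ∈ invSet u | p.1 < l}.ncard + {p ∈ invSet u | l ≤ p.1}.ncard := by
  rw [inversions, ← invSet,
    ← Set.ncard_inter_add_ncard_sdiff_eq_ncard (invSet u) {p | p.1 < l} hfin]
  congr 2
  ext p
  simp

/-- The inversions `(i, j)` of `w * v` with `i < l` are carried injectively to inversions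
`(i, v j)` of `w`, since `v` fixes `[0, l)` and hence preserves `[l, ∞)`. -/
lemma ncard_invSet_mul_fst_lt_le {w v : Equiv.Perm ℕ} {l : ℕ} (hv : ∀ i < l, v i = i)
    (hw : (invSet w).Finite) : {p ∈ invSet (w * v) | p.1 < l}.ncard ≤ inversions w := by
  refine Set.ncard_le_ncard_of_injOn (fun p => (p.1, v p.2)) ?_ ?_ hw
  · rintro ⟨i, j⟩ ⟨⟨hij, hinv⟩, hi⟩
    refine ⟨?_, by simpa [hv i hi] using hinv⟩
    rcases lt_or_ge j l with hj | hj
    · simpa [hv j hj] using hij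
    · exact hi.trans_le (le_apply_of_forall_lt_fixed hv hj)
  · rintro ⟨i, j⟩ - ⟨i', j'⟩ - h
    simp only [Prod.mk.injEq] at h
    simp [h.1, v.injective h.2]

lemma lehmerCode_eq_card {u : Equiv.Perm ℕ} {n : ℕ} (hu : ∀ i, n ≤ i → u i = i) (i : ℕ) :
    lehmerCode u i = ((Finset.range n).filter fun j => (i, j) ∈ invSet u).card := by
  rw [lehmerCode, ← Set.ncard_coe_finset]
  congr 1
  ext j
  simp only [Finset.coe_filter, Finset.mem_range]
  exact ⟨fun h => ⟨(lt_of_mem_invSet hu (p := (i, j)) h).2, h⟩, And.right⟩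

lemma sum_lehmerCode_Ico {u : Equiv.Perm ℕ} {n : ℕ} (hu : ∀ i, n ≤ i → u i = i) (l : ℕ) :
    ∑ i ∈ Finset.Ico l n, lehmerCode u i = {p ∈ invSet u | l ≤ p.1}.ncard := by
  have htail : {p ∈ invSet u | l ≤ p.1} =
      ↑((Finset.Ico l n ×ˢ Finset.range n).filter (· ∈ invSet u)) := by
    ext p
    have := lt_of_mem_invSet hu (p := p)
    simp only [Set.mem_ofPred_eq, Finset.coe_filter, Finset.mem_product, Finset.mem_Ico,
      Finset.mem_range]
    tauto
  simp_rw [htail, Set.ncard_coe_finset, Finset.card_filter, Finset.sum_product,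
    lehmerCode_eq_card hu, Finset.card_filter]

lemma sum_map_range'_eq_sum_Ico (f : ℕ → ℕ) (a b : ℕ) :
    ((List.range' a (b - a)).map f).sum = ∑ i ∈ Finset.Ico a b, f i := by
  rw [Finset.sum, Nat.Ico_eq_range']
  simp

lemma pdWord_eq_append {l n : ℕ} (D : Finset (ℕ × ℕ)) (hl : l ≤ n) :
    pdWord n D = ((List.range' 0 l).map (rowWord n D)).flatten ++
      ((List.range' l (n - l)).map (rowWord n D)).flatten := by
  have hrange : List.range' 0 l ++ List.range' l (n - l) = List.range n := by
    simpa [Nat.add_sub_cancel' hl, List.range_eq_range'] using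
      List.range'_append_1 (s := 0) (m := l) (n := n - l)
  rw [← List.flatten_append, ← List.map_append, hrange]
  rfl

lemma le_of_mem_rowWord {n : ℕ} {D : Finset (ℕ × ℕ)} {i k : ℕ} (hk : k ∈ rowWord n D i) :
    i ≤ k := by
  obtain ⟨j, -, rfl⟩ := List.mem_map.mp hk
  omega

lemma le_of_mem_flatten_rowWord {n : ℕ} {D : Finset (ℕ × ℕ)} {a m k : ℕ}
    (hk : k ∈ ((List.range' a m).map (rowWord n D)).flatten) : a ≤ k := by
  simp only [List.mem_flatten, List.mem_map] at hk
  obtain ⟨_, ⟨i, hi, rfl⟩, hk⟩ := hk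
  exact (List.mem_range'_1.mp hi).1.trans (le_of_mem_rowWord hk)

lemma length_rowWord {n : ℕ} {D : Finset (ℕ × ℕ)} (hD : ∀ p ∈ D, p.1 + p.2 + 1 ≤ n) (i : ℕ) :
    (rowWord n D i).length = wt D i := by
  rw [rowWord, List.length_map, List.filter_reverse, List.length_reverse,
    ← List.toFinset_card_of_nodup (List.nodup_range.filter _), List.toFinset_filter,
    List.toFinset_range, wt]
  refine Finset.card_bij (fun j _ => (i, j)) ?_ ?_ ?_
  · intro j hj
    simpa using (Finset.mem_filter.mp hj).2
  · intro j _ j' _ h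
    exact (Prod.mk.inj h).2
  · rintro ⟨i', j⟩ hp
    obtain ⟨hpD, rfl : i' = i⟩ := Finset.mem_filter.mp hp
    have := hD _ hpD
    exact ⟨j, Finset.mem_filter.mpr ⟨Finset.mem_range.mpr (by omega), by simpa⟩, rfl⟩

lemma length_flatten_rowWord {n : ℕ} {D : Finset (ℕ × ℕ)} (hD : ∀ p ∈ D, p.1 + p.2 + 1 ≤ n)
    (a b : ℕ) :
    ((List.range' a (b - a)).map (rowWord n D)).flatten.length = ∑ i ∈ Finset.Ico a b, wt D i := by
  rw [List.length_flatten, List.map_map, ← sum_map_range'_eq_sum_Ico]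
  simp only [Function.comp_def, length_rowWord hD]

lemma length_pdWord {n : ℕ} {D : Finset (ℕ × ℕ)} (hD : ∀ p ∈ D, p.1 + p.2 + 1 ≤ n) :
    (pdWord n D).length = D.card := by
  have hword : pdWord n D = ((List.range' 0 (n - 0)).map (rowWord n D)).flatten := by
    rw [Nat.sub_zero, ← List.range_eq_range']
    rfl
  rw [hword, length_flatten_rowWord hD, ← Finset.range_eq_Ico]
  refine (Finset.card_eq_sum_card_fiberwise fun p hp => ?_).symm
  have := hD p hp
  simp only [Finset.mem_coe, Finset.mem_range]
  omega

/-- For every pipe dream `D` for `u ∈ S_n`, the weight of `D` is dominated by the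
Lehmer code of `u` in the reverse dominance order: for every (0-indexed) `l < n`,
`Σ_{i=l}^{n-1} wt(D)_i ≤ Σ_{i=l}^{n-1} c_i(u)`. -/
theorem pipeDream_weight_le_code_revdom
    (n : ℕ) (u : Equiv.Perm ℕ) (hu : ∀ i, n ≤ i → u i = i)
    (D : Finset (ℕ × ℕ)) (hD : IsPipeDream n u D) :
    ∀ l, l < n →
      ∑ i ∈ Finset.Ico l n, wt D i ≤ ∑ i ∈ Finset.Ico l n, lehmerCode u i := by
  intro l hl
  obtain ⟨htri, hperm, hcard⟩ := hD
  set top := ((List.range' 0 l).map (rowWord n D)).flatten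
  set bot := ((List.range' l (n - l)).map (rowWord n D)).flatten
  have hsplit : pdWord n D = top ++ bot := pdWord_eq_append D hl.le
  have hu_eq : u = swapsProd top * swapsProd bot := by
    rw [← hperm, ← swapsProd_append, ← hsplit]
    rfl
  have hbot_fix : ∀ i < l, swapsProd bot i = i :=
    fun i => swapsProd_apply_of_lt fun k => le_of_mem_flatten_rowWord
  have hbot_len : bot.length = ∑ i ∈ Finset.Ico l n, wt D i := length_flatten_rowWord htri l n
  have hlen : top.length + bot.length = inversions u := by
    rw [← List.length_append, ← hsplit, length_pdWord htri, hcard]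
  have hhead : {p ∈ invSet u | p.1 < l}.ncard ≤ top.length := by
    rw [hu_eq]
    exact (ncard_invSet_mul_fst_lt_le hbot_fix (finite_invSet_swapsProd top)).trans
      (inversions_swapsProd_le top)
  have hfin : (invSet u).Finite := hperm ▸ finite_invSet_swapsProd (pdWord n D)
  rw [← hbot_len, sum_lehmerCode_Ico hu]
  have hinv := inversions_eq_ncard_add_ncard hfin l
  omega
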